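/- arXiv:math/0607476 — 3 statements merged into one kernel-verified Lean document; each statement's English description precedes it below -/
import Mathlib

section
/- Let A and B be ℤ-graded rings, i.e. rings equipped with direct sum decompositions A = ⊕_{i∈ℤ} Aⁱ and B = ⊕_{i∈ℤ} Bⁱ into additive subgroups with Aⁱ·Aʲ ⊆ A^{i+j} and Bⁱ·Bʲ ⊆ B^{i+j}. Let f : A → B be a ring homomorphism with f(Aⁱ) = Bⁱ for every i ∈ ℤ (in particular f is surjective), and assume that every element of A⁰ lying in the kernel of f is nilpotent. Let ϕ₁, ϕ₂ be idempotents in A⁰, let d ∈ ℤ, and suppose there are elements θ₁₂ ∈ B^{-d} and θ₂₁ ∈ B^{d} with f(ϕ₂)·θ₁₂·f(ϕ₁) = θ₁₂, f(ϕ₁)·θ₂₁·f(ϕ₂) = θ₂₁, θ₁₂θ₂₁ = f(ϕ₂), and θ₂₁θ₁₂ = f(ϕ₁). Then there exist elements ϑ₁₂ ∈ A^{-d} and ϑ₂₁ ∈ A^{d} with ϕ₂·ϑ₁₂·ϕ₁ = ϑ₁₂, ϕ₁·ϑ₂₁·ϕ₂ = ϑ₂₁, ϑ₁₂ϑ₂₁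 = ϕ₂, ϑ₂₁ϑ₁₂ = ϕ₁, and f(ϑ₁₂) = θ₁₂. -/
/-- Proposition 2.5, isomorphism part: a surjective homomorphism of
ℤ-graded rings whose kernel in degree 0 consists of nilpotents lifts
isomorphisms between idempotents strictly. -/
theorem lifts_isomorphisms_strictly
    {A B : Type*} [Ring A] [Ring B]
    (𝒜 : ℤ → AddSubgroup A) (ℬ : ℤ → AddSubgroup B)
    [GradedRing 𝒜] [GradedRing ℬ]
    (f : A →+* B)
    (hgr : ∀ i : ℤ, f '' (𝒜 i : Set A) = (ℬ i : Set B))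
    (hker : ∀ a ∈ 𝒜 0, f a = 0 → IsNilpotent a)
    (ϕ1 ϕ2 : A) (hϕ1 : ϕ1 ∈ 𝒜 0) (hϕ2 : ϕ2 ∈ 𝒜 0)
    (hϕ1idem : IsIdempotentElem ϕ1) (hϕ2idem : IsIdempotentElem ϕ2)
    (d : ℤ) (θ12 θ21 : B)
    (hθ12mem : θ12 ∈ ℬ (-d)) (hθ21mem : θ21 ∈ ℬ d)
    (hθ12 : f ϕ2 * θ12 * f ϕ1 = θ12)
    (hθ21 : f ϕ1 * θ21 * f ϕ2 = θ21)
    (hcomp1 : θ12 * θ21 = f ϕ2)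
    (hcomp2 : θ21 * θ12 = f ϕ1) :
    ∃ ϑ12 ϑ21 : A,
      ϑ12 ∈ 𝒜 (-d) ∧ ϑ21 ∈ 𝒜 d ∧
      ϕ2 * ϑ12 * ϕ1 = ϑ12 ∧ ϕ1 * ϑ21 * ϕ2 = ϑ21 ∧
      ϑ12 * ϑ21 = ϕ2 ∧ ϑ21 * ϑ12 = ϕ1 ∧
      f ϑ12 = θ12 := by
  -- lift θ12 and θ21
  obtain ⟨x', hx'mem, hx'⟩ : ∃ x' ∈ 𝒜 (-d), f x' = θ12 := by
    have h : θ12 ∈ ⇑f '' ((𝒜 (-d) : AddSubgroup A) : Set A) := by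
      rw [hgr]; exact hθ12mem
    obtain ⟨x', hx', hfx⟩ := h
    exact ⟨x', hx', hfx⟩
  obtain ⟨y', hy'mem, hy'⟩ : ∃ y' ∈ 𝒜 d, f y' = θ21 := by
    have h : θ21 ∈ ⇑f '' ((𝒜 d : AddSubgroup A) : Set A) := by
      rw [hgr]; exact hθ21mem
    obtain ⟨y', hy', hfy⟩ := h
    exact ⟨y', hy', hfy⟩
  set x : A := ϕ2 * x' * ϕ1 with hxdef
  set y : A := ϕ1 * y' * ϕ2 with hydef
  have hxmem : x ∈ 𝒜 (-d) := by
    have h2 : ϕ2 * x' * ϕ1 ∈ 𝒜 (0 + -d + 0) :=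
      SetLike.mul_mem_graded (SetLike.mul_mem_graded hϕ2 hx'mem) hϕ1
    simpa using h2
  have hymem : y ∈ 𝒜 d := by
    have h2 : ϕ1 * y' * ϕ2 ∈ 𝒜 (0 + d + 0) :=
      SetLike.mul_mem_graded (SetLike.mul_mem_graded hϕ1 hy'mem) hϕ2
    simpa using h2
  have hfx : f x = θ12 := by rw [hxdef, map_mul, map_mul, hx', hθ12]
  have hfy : f y = θ21 := by rw [hydef, map_mul, map_mul, hy', hθ21]
  have hϕ2x : ϕ2 * x = x := by
    simp only [hxdef, ← mul_assoc]; rw [hϕ2idem]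
  have hxϕ1 : x * ϕ1 = x := by
    simp only [hxdef, mul_assoc]; rw [hϕ1idem]
  have hϕ1y : ϕ1 * y = y := by
    simp only [hydef, ← mul_assoc]; rw [hϕ1idem]
  have hyϕ2 : y * ϕ2 = y := by
    simp only [hydef, mul_assoc]; rw [hϕ2idem]
  -- the error term n
  set n : A := ϕ2 - x * y with hndef
  have hnmem : n ∈ 𝒜 0 := by
    have : x * y ∈ 𝒜 (-d + d) := SetLike.mul_mem_graded hxmem hymem
    simp only [neg_add_cancel] at this
    exact sub_mem hϕ2 this
  have hfn : f n = 0 := by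
    rw [hndef, map_sub, map_mul, hfx, hfy, hcomp1, sub_self]
  obtain ⟨m, hm⟩ := hker n hnmem hfn
  have hm' : n ^ (m + 1) = 0 := by rw [pow_succ, hm, zero_mul]
  have hϕ2n : ϕ2 * n = n := by
    rw [hndef, mul_sub, hϕ2idem, ← mul_assoc, hϕ2x]
  have hnϕ2 : n * ϕ2 = n := by
    rw [hndef, sub_mul, hϕ2idem, mul_assoc, hyϕ2]
  have hc : Commute ϕ2 n := by
    unfold Commute SemiconjBy; rw [hϕ2n, hnϕ2]
  set v : A := ∑ k ∈ Finset.range (m + 1), n ^ k with hvdef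
  have hvmem : v ∈ 𝒜 0 := by
    apply Submodule.sum_mem (AddSubgroup.toIntSubmodule (𝒜 0))
    intro k _
    have := SetLike.pow_mem_graded k hnmem
    exact (by simpa using this : n ^ k ∈ 𝒜 0)
  have hcv : Commute ϕ2 v := Commute.sum_right _ _ _ (fun k _ => hc.pow_right k)
  have h1nv : (1 - n) * v = 1 := by
    have := mul_geom_sum n (m + 1)
    rw [hm'] at this
    have h2 : -((n - 1) * v) = -((0:A) - 1) := by rw [this]
    simpa [neg_sub, sub_mul] using h2
  set V : A := ϕ2 * v with hVdef
  have hVmem : V ∈ 𝒜 0 := by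
    have : ϕ2 * v ∈ 𝒜 (0 + 0) := SetLike.mul_mem_graded hϕ2 hvmem
    simpa using this
  have hVϕ2 : V * ϕ2 = V := by
    rw [hVdef, mul_assoc, ← hcv.eq, ← mul_assoc, hϕ2idem]
  have hϕ2V : ϕ2 * V = V := by
    rw [hVdef, ← mul_assoc, hϕ2idem]
  -- key inverse property
  have huV : x * y * V = ϕ2 := by
    have hxy : x * y = ϕ2 - n := by rw [hndef, sub_sub_cancel]
    have h2 : (ϕ2 - n) = ϕ2 * (1 - n) := by rw [mul_sub, mul_one, hϕ2n]
    calc x * y * V = (ϕ2 - n) * (ϕ2 * v) := by rw [hxy, hVdef]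
      _ = (ϕ2 * (1 - n)) * (ϕ2 * v) := by rw [← h2]
      _ = ϕ2 * ((1 - n) * ϕ2) * v := by simp only [mul_assoc]
      _ = ϕ2 * (ϕ2 * (1 - n)) * v := by rw [((Commute.one_left ϕ2).sub_left hc.symm).eq]
      _ = ϕ2 * (ϕ2 * ((1 - n) * v)) := by simp only [mul_assoc]
      _ = ϕ2 := by rw [h1nv, mul_one, hϕ2idem]
  -- the candidate inverse
  set z : A := y * V with hzdef
  have hzmem : z ∈ 𝒜 d := by
    have : y * V ∈ 𝒜 (d + 0) := SetLike.mul_mem_graded hymem hVmem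
    simpa using this
  have hϕ1z : ϕ1 * z = z := by rw [hzdef, ← mul_assoc, hϕ1y]
  have hzϕ2 : z * ϕ2 = z := by rw [hzdef, mul_assoc, hVϕ2]
  have hxz : x * z = ϕ2 := by rw [hzdef, ← mul_assoc, huV]
  -- w := z * x is an idempotent congruent to ϕ1
  set w : A := z * x with hwdef
  have hϕ1w : ϕ1 * w = w := by rw [hwdef, ← mul_assoc, hϕ1z]
  have hwϕ1 : w * ϕ1 = w := by rw [hwdef, mul_assoc, hxϕ1]
  have hwidem : w * w = w := by
    calc w * w = z * (x * z) * x := by rw [hwdef]; simp only [mul_assoc]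
      _ = z * ϕ2 * x := by rw [hxz]
      _ = w := by rw [hzϕ2, hwdef]
  have hfϕ2idem : f ϕ2 * f ϕ2 = f ϕ2 := by rw [← map_mul, hϕ2idem]
  have hfv : f v = 1 := by
    rw [hvdef, map_sum]
    have : ∀ k ∈ Finset.range (m + 1), f (n ^ k) = (0:B) ^ k := by
      intro k _; rw [map_pow, hfn]
    rw [Finset.sum_congr rfl this, zero_geom_sum]
    simp
  have hfV : f V = f ϕ2 := by rw [hVdef, map_mul, hfv, mul_one]
  have hθ21ϕ2 : θ21 * f ϕ2 = θ21 := by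
    conv_lhs => rw [← hθ21]
    rw [mul_assoc, mul_assoc, hfϕ2idem, ← mul_assoc]
    exact hθ21
  have hfw : f w = f ϕ1 := by
    rw [hwdef, hzdef, map_mul, map_mul, hfy, hfV, hfx, hθ21ϕ2, hcomp2]
  -- the error e := ϕ1 - w is a nilpotent idempotent, hence zero
  set e : A := ϕ1 - w with hedef
  have hemem : e ∈ 𝒜 0 := by
    have : z * x ∈ 𝒜 (d + -d) := SetLike.mul_mem_graded hzmem hxmem
    simp only [add_neg_cancel] at this
    exact sub_mem hϕ1 (hwdef ▸ this)
  have hfe : f e = 0 := by rw [hedef, map_sub, hfw, sub_self]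
  obtain ⟨k, hk⟩ := hker e hemem hfe
  have heidem : IsIdempotentElem e := by
    unfold IsIdempotentElem
    rw [hedef, mul_sub, sub_mul, sub_mul, hϕ1idem, hϕ1w, hwϕ1, hwidem,
      sub_self, sub_zero]
  have he0 : e = 0 := by
    have h1 : e ^ (k + 1) = e := heidem.pow_succ_eq k
    have h2 : e ^ (k + 1) = 0 := by rw [pow_succ, hk, zero_mul]
    rw [← h1, h2]
  have hzx : z * x = ϕ1 := by
    have := sub_eq_zero.mp (hedef ▸ he0)
    rw [← hwdef, ← this]
  refine ⟨x, z, hxmem, hzmem, ?_, ?_, hxz, hzx, hfx⟩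
  · rw [hϕ2x, hxϕ1]
  · rw [mul_assoc, hzϕ2, hϕ1z]
end

section
/- Let m ≥ 2 be an integer such that every unit of the ring ℤ/mℤ equals 1 or −1. Let V₁ and V₂ be finitely generated free ℤ-modules and let θ : V₁/mV₁ → V₂/mV₂ be an isomorphism of ℤ/mℤ-modules. Then there exists a ℤ-module isomorphism ϑ : V₁ → V₂ whose reduction modulo m equals θ, i.e. the induced map V₁/mV₁ → V₂/mV₂ coincides with θ. -/
open TensorProduct

/-- Proposition 2.10, isomorphism part: if `(ℤ/m)ˣ = {±1}`, every
`ℤ/m`-linear isomorphism `V₁ ⊗ ℤ/m ≃ V₂ ⊗ ℤ/m` of reductions of finitely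
generated free `ℤ`-modules lifts to a `ℤ`-linear isomorphism `V₁ ≃ V₂`. -/
theorem reduction_lifts_isomorphisms
    (m : ℕ) (hm : 2 ≤ m)
    (hu : ∀ u : (ZMod m)ˣ, (u : ZMod m) = 1 ∨ (u : ZMod m) = -1)
    (V₁ V₂ : Type*) [AddCommGroup V₁] [Module ℤ V₁]
    [Module.Free ℤ V₁] [Module.Finite ℤ V₁]
    [AddCommGroup V₂] [Module ℤ V₂]
    [Module.Free ℤ V₂] [Module.Finite ℤ V₂]
    (θ : (ZMod m ⊗[ℤ] V₁) ≃ₗ[ZMod m] (ZMod m ⊗[ℤ] V₂)) :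
    ∃ ϑ : V₁ ≃ₗ[ℤ] V₂,
      LinearMap.baseChange (ZMod m) (ϑ : V₁ →ₗ[ℤ] V₂)
        = (θ : (ZMod m ⊗[ℤ] V₁) →ₗ[ZMod m] (ZMod m ⊗[ℤ] V₂)) := by
  classical
  haveI : Fact (1 < m) := ⟨hm⟩
  set R := ZMod m with hR
  -- every element of `R ⊗ V₂` is of the form `1 ⊗ x`
  have hsurj : ∀ w : R ⊗[ℤ] V₂, ∃ x : V₂, (1 : R) ⊗ₜ[ℤ] x = w := by
    intro w
    induction w using TensorProduct.induction_on with
    | zero => exact ⟨0, by simp⟩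
    | tmul z x =>
      refine ⟨z.val • x, ?_⟩
      rw [tmul_smul, ← Nat.cast_smul_eq_nsmul R, smul_tmul', smul_eq_mul, mul_one,
        ZMod.natCast_val, ZMod.cast_id]
    | add u v hu' hv' =>
      obtain ⟨x, hx⟩ := hu'; obtain ⟨y, hy⟩ := hv'
      exact ⟨x + y, by rw [tmul_add, hx, hy]⟩
  choose lift hlift using hsurj
  -- bases
  let ι := Module.Free.ChooseBasisIndex ℤ V₁
  let b₁ : Module.Basis ι ℤ V₁ := Module.Free.chooseBasis ℤ V₁
  let b₂0 := Module.Free.chooseBasis ℤ V₂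
  have hcard : Fintype.card (Module.Free.ChooseBasisIndex ℤ V₂) = Fintype.card ι := by
    have h1 := Module.finrank_eq_card_basis (b₁.baseChange R)
    have h2 := Module.finrank_eq_card_basis (b₂0.baseChange R)
    have h3 := LinearEquiv.finrank_eq θ
    rw [h1] at h3; rw [h2] at h3; exact h3.symm
  let b₂ : Module.Basis ι ℤ V₂ := b₂0.reindex (Fintype.equivOfCardEq hcard)
  -- the lift φ of θ
  let φ : V₁ →ₗ[ℤ] V₂ := b₁.constr ℕ fun j => lift (θ ((1 : R) ⊗ₜ b₁ j))
  have hφbc : LinearMap.baseChange R φ = θ.toLinearMap := by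
    apply (b₁.baseChange R).ext
    intro i
    rw [Module.Basis.baseChange_apply, LinearMap.baseChange_tmul]
    simp only [φ, Module.Basis.constr_basis, hlift, LinearEquiv.coe_coe]
  -- matrices
  let M : Matrix ι ι ℤ := LinearMap.toMatrix b₁ b₂ φ
  let bc₁ := b₁.baseChange R
  let bc₂ := b₂.baseChange R
  let A : Matrix ι ι R := LinearMap.toMatrix bc₁ bc₂ θ.toLinearMap
  have hMA : M.map (Int.cast : ℤ → R) = A := by
    ext j i
    simp only [M, A, Matrix.map_apply]
    rw [LinearMap.toMatrix_apply, LinearMap.toMatrix_apply, ← hφbc,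
      Module.Basis.baseChange_apply, LinearMap.baseChange_tmul, Module.Basis.baseChange_repr_tmul,
      zsmul_eq_mul, mul_one]
  have hAunit : IsUnit A.det := by
    have h1 : A * LinearMap.toMatrix bc₂ bc₁ θ.symm.toLinearMap = 1 := by
      rw [← LinearMap.toMatrix_comp bc₂ bc₁ bc₂]
      simp
    have h2 : A.det * (LinearMap.toMatrix bc₂ bc₁ θ.symm.toLinearMap).det = 1 := by
      rw [← Matrix.det_mul, h1, Matrix.det_one]
    exact IsUnit.of_mul_eq_one _ h2
  have hdet : M.det ≠ 0 := by
    intro h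
    have hA0 : A.det = 0 := by
      rw [← hMA]
      show ((Int.castRingHom R).mapMatrix M).det = 0
      rw [← RingHom.map_det, h]
      simp
    rw [hA0] at hAunit
    exact not_isUnit_zero hAunit
  have hinj : Function.Injective φ := by
    rw [← LinearMap.ker_eq_bot]
    apply (Submodule.eq_bot_iff _).mpr
    intro x hx
    have h0 : M.mulVec (b₁.repr x) = 0 := by
      rw [LinearMap.toMatrix_mulVec_repr, LinearMap.mem_ker.mp hx]
      simp
    have h1 : M.det • (⇑(b₁.repr x) : ι → ℤ) = 0 := by
      have h2 := congrArg (fun v => M.adjugate.mulVec v) h0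
      simpa [Matrix.mulVec_mulVec, Matrix.adjugate_mul, Matrix.smul_mulVec,
        Matrix.one_mulVec] using h2
    have h3 : (⇑(b₁.repr x) : ι → ℤ) = 0 := by
      rcases smul_eq_zero.mp h1 with h | h
      · exact absurd h hdet
      · exact h
    have h4 : b₁.repr x = 0 := DFunLike.coe_injective h3
    simpa using congrArg b₁.repr.symm h4
  -- Smith normal form of the range of φ
  letI : Module ℤ ↥(LinearMap.range φ) := (LinearMap.range φ).module
  obtain ⟨k, bM, bN, f, a, hsnf⟩ := Submodule.smithNormalForm b₂ (LinearMap.range φ)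
  let c : Module.Basis (Fin k) ℤ V₁ := bN.map (LinearEquiv.ofInjective φ hinj).symm
  have hφc : ∀ i, φ (c i) = ((bN i : LinearMap.range φ) : V₂) := by
    intro i
    simp only [c, Module.Basis.map_apply]
    conv_rhs => rw [← (LinearEquiv.ofInjective φ hinj).apply_symm_apply (bN i)]
    rw [LinearEquiv.ofInjective_apply]
  have hθc : ∀ i, θ ((1 : R) ⊗ₜ[ℤ] c i) = ((a i : ℤ) : R) • ((1 : R) ⊗ₜ[ℤ] bM (f i)) := by
    intro i
    have h3 := congrArg (fun g : R ⊗[ℤ] V₁ →ₗ[R] R ⊗[ℤ] V₂ => g ((1 : R) ⊗ₜ[ℤ] c i)) hφbc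
    simp only [LinearMap.baseChange_tmul, LinearEquiv.coe_coe] at h3
    rw [← h3, hφc i, hsnf i]
    exact ((TensorProduct.mk ℤ R V₂ 1).map_smul (a i) (bM (f i))).trans
      (Int.cast_smul_eq_zsmul R (a i) _).symm
  -- each a i is a unit mod m
  have haunit : ∀ i, IsUnit ((a i : ℤ) : R) := by
    intro i
    let cc := Module.Basis.baseChange R c
    let bMc := Module.Basis.baseChange R bM
    let Mθ : Matrix ι (Fin k) R := LinearMap.toMatrix cc bMc θ.toLinearMap
    let Mθ' : Matrix (Fin k) ι R := LinearMap.toMatrix bMc cc θ.symm.toLinearMap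
    have hone : Mθ' * Mθ = 1 := by
      simp only [Mθ, Mθ']
      rw [← LinearMap.toMatrix_comp cc bMc cc]
      simp
    have hcol : ∀ j, Mθ j i = if f i = j then ((a i : ℤ) : R) else 0 := by
      intro j
      simp only [Mθ, LinearMap.toMatrix_apply, cc, bMc, Module.Basis.baseChange_apply,
        LinearEquiv.coe_coe]
      rw [hθc i, map_smul]
      simp [Module.Basis.baseChange_repr_tmul, Finsupp.single_apply]
    have hdiag : Mθ' i (f i) * ((a i : ℤ) : R) = 1 := by
      have h4 := congrFun (congrFun hone i) i
      rw [Matrix.mul_apply] at h4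
      rw [show (1 : Matrix (Fin k) (Fin k) R) i i = 1 by simp] at h4
      calc Mθ' i (f i) * ((a i : ℤ) : R)
          = ∑ j, Mθ' i j * Mθ j i := by
            rw [Finset.sum_congr rfl fun j _ => by rw [hcol j]]
            simp [mul_ite]
        _ = 1 := h4
    exact IsUnit.of_mul_eq_one _ (by rw [mul_comm]; exact hdiag)
  -- choose signs
  have hεex : ∀ i, ∃ ε : ℤˣ, (((ε : ℤ) : R)) = ((a i : ℤ) : R) := by
    intro i
    obtain ⟨u, hu'⟩ := haunit i
    rcases hu u with h | h
    · exact ⟨1, by rw [Units.val_one, Int.cast_one, ← h, hu']⟩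
    · exact ⟨-1, by rw [Units.val_neg, Units.val_one, Int.cast_neg, Int.cast_one, ← h, hu']⟩
  choose ε hε using hεex
  -- k = card ι
  have hk : Fintype.card (Fin k) = Fintype.card ι := by
    have h1 := Module.finrank_eq_card_basis c
    have h2 := Module.finrank_eq_card_basis b₁
    rw [h1] at h2
    exact h2
  let e : Fin k ≃ ι :=
    Equiv.ofBijective f ((Fintype.bijective_iff_injective_and_card f).mpr ⟨f.injective, hk⟩)
  -- the final isomorphism
  let b2' : Module.Basis (Fin k) ℤ V₂ := (bM.reindex e.symm).unitsSMul ε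
  let ϑ : V₁ ≃ₗ[ℤ] V₂ := c.equiv b2' (Equiv.refl _)
  refine ⟨ϑ, ?_⟩
  apply (Module.Basis.baseChange R c).ext
  intro i
  rw [Module.Basis.baseChange_apply, LinearMap.baseChange_tmul]
  have h5 : ϑ (c i) = b2' (Equiv.refl (Fin k) i) := c.equiv_apply i b2' (Equiv.refl _)
  simp only [LinearEquiv.coe_coe]
  rw [h5]
  simp only [b2', Equiv.refl_apply]
  rw [Module.Basis.unitsSMul_apply, Module.Basis.reindex_apply]
  have h7 : e.symm.symm i = f i := by rw [Equiv.symm_symm]; rfl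
  rw [h7, hθc i, ← hε i]
  exact ((TensorProduct.mk ℤ R V₂ 1).map_smul ((ε i : ℤ)) (bM (f i))).trans
    (Int.cast_smul_eq_zsmul R ((ε i : ℤ)) ((1 : R) ⊗ₜ[ℤ] bM (f i))).symm
end

section
/- Let R be a commutative ring, let C be a commutative R-algebra that is a finitely generated free R-module, and let deg : C → R be an R-linear map. Let ρ : C ⊗_R C → End_R(C) be the R-linear map determined on pure tensors by ρ(a ⊗ b)(x) = deg(a·x)·b, let τ : C ⊗_R C → C ⊗_R C be the swap map a ⊗ b ↦ b ⊗ a, let the product on C ⊗_R C be the algebra tensor product multiplication, and let D = deg ⊗ deg : C ⊗_R C → R. Then for all φ, ψ ∈ C ⊗_R C one has D(φ · τ(ψ)) = trace(ρ(φ) ∘ ρ(ψ)), where trace denotes the trace of an R-linear endomorphism of the finitely generated free R-module C. -/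
open TensorProduct

/-!
Both sides are `R`-bilinear in `(φ, ψ)`, so it suffices to take `φ = a ⊗ b`, `ψ = c ⊗ d`.
Then `ρ (a ⊗ b)` is the rank-one map `x ↦ deg (a x) • b`, whose trace is `deg (a b)`, and
`ρ (a ⊗ b) ∘ ρ (c ⊗ d) = deg (a d) • ρ (c ⊗ b)`; both sides become `deg (a d) * deg (b c)`.
-/

section Correspondence

variable {R C : Type*} [CommRing R] [CommRing C] [Algebra R C]
  {deg : C →ₗ[R] R} {ρ : C ⊗[R] C →ₗ[R] Module.End R C}

theorem correspondence_tmul_eq_smulRight (hρ : ∀ a b x : C, ρ (a ⊗ₜ[R] b) x = deg (a * x) • b)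
    (a b : C) : ρ (a ⊗ₜ[R] b) = (deg ∘ₗ LinearMap.mulLeft R a).smulRight b :=
  LinearMap.ext fun x => hρ a b x

theorem trace_correspondence_tmul [Module.Finite R C] [Module.Free R C]
    (hρ : ∀ a b x : C, ρ (a ⊗ₜ[R] b) x = deg (a * x) • b) (a b : C) :
    LinearMap.trace R C (ρ (a ⊗ₜ[R] b)) = deg (a * b) := by
  rw [correspondence_tmul_eq_smulRight hρ, LinearMap.trace_smulRight]
  rfl

theorem correspondence_tmul_comp_tmul (hρ : ∀ a b x : C, ρ (a ⊗ₜ[R] b) x = deg (a * x) • b)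
    (a b c d : C) : ρ (a ⊗ₜ[R] b) ∘ₗ ρ (c ⊗ₜ[R] d) = deg (a * d) • ρ (c ⊗ₜ[R] b) := by
  ext x
  simp only [LinearMap.comp_apply, LinearMap.smul_apply, hρ, mul_smul_comm, map_smul, smul_smul,
    smul_eq_mul, mul_comm]

end Correspondence

/-- Lemma 6.2 in the split situation: for correspondences `φ, ψ` on a split
variety with Chow ring `C`, `deg⊗deg (φ · ψᵗ) = tr(ρ(φ) ∘ ρ(ψ))`. -/
theorem deg_mul_transpose_eq_trace
    {R C : Type*} [CommRing R] [CommRing C] [Algebra R C]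
    [Module.Finite R C] [Module.Free R C]
    (deg : C →ₗ[R] R)
    (ρ : C ⊗[R] C →ₗ[R] Module.End R C)
    (hρ : ∀ a b x : C, ρ (a ⊗ₜ[R] b) x = deg (a * x) • b)
    (D : C ⊗[R] C →ₗ[R] R)
    (hD : ∀ a b : C, D (a ⊗ₜ[R] b) = deg a * deg b) :
    ∀ φ ψ : C ⊗[R] C,
      D (φ * (TensorProduct.comm R C C ψ)) = LinearMap.trace R C (ρ φ ∘ₗ ρ ψ) := by
  have hbilin : ((LinearMap.mul R (C ⊗[R] C)).compr₂ D).compl₂ (TensorProduct.comm R C C).toLinearMap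
      = ((LinearMap.llcomp R C C C).compl₁₂ ρ ρ).compr₂ (LinearMap.trace R C) := by
    refine TensorProduct.ext' fun a b => TensorProduct.ext' fun c d => ?_
    simp only [LinearMap.compl₂_apply, LinearMap.compr₂_apply, LinearMap.compl₁₂_apply,
      LinearMap.llcomp_apply', LinearEquiv.coe_coe, comm_tmul, LinearMap.mul_apply',
      Algebra.TensorProduct.tmul_mul_tmul, hD, correspondence_tmul_comp_tmul hρ, map_smul,
      trace_correspondence_tmul hρ, smul_eq_mul, mul_comm c b]
  exact LinearMap.congr_fun₂ hbilin
end
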